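/- arXiv:0903.0457 — 6 statements merged into one kernel-verified Lean document; each statement's English description precedes it below -/
import Mathlib

section
/- Let x₁, x₂ be real numbers with 0 < x₁ < x₂ < 2x₁, let s₁, q, r be nonzero reals, set X = s₁F₁₇ and Y = q(F₁₆ − F₃₄) + r(F₂₆ − F₃₅), and let Z ∈ u(3) be the matrix with parameters a,b,c,d,e,f,g,h,k. If [Z,Y] = 0 and (x₂−x₁)·[X,Y] = x₁·[X,Z], then a = b = c = d = e = g = k = 0, f = ((x₂−x₁)/x₁)·q and h = ((x₂−x₁)/x₁)·r; consequently W = X + Y + Z equals s₁F₁₇ + (x₂/x₁)q·F₁₆ + (x₂/x₁)r·F₂₆ + ((x₂−2x₁)/x₁)q·F₃₄ + ((x₂−2x₁)/x₁)r·F₃₅. -/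
/-!
Both conditions become linear equations in the parameters of `Z` once the commutators are
expanded in the basis `F i j`. Bracketing with `F₁₇` only sees the first row `(a, b, d, e, f)`
of `Z`, so the second condition forces `a = b = d = e = 0` and `x₁ f = (x₂ - x₁) q`. The
commutator `[Z, Y]` has the coefficients `h q - f r`, `(d + k) q + e r`, `c q - b r`,
`e q + (g + k) r`, `a q` and `a r`; their vanishing, with `q, r ≠ 0`, gives `c = g = k = 0` and
`h q = f r`.
-/

open Matrix

/-- `F i j = E_{ij} - E_{ji}` (here `i j : Fin 7` are zero-based indices, while the
paper uses one-based indices: `F₁₇ = F 0 6`, etc.). -/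
def F (i j : Fin 7) : Matrix (Fin 7) (Fin 7) ℝ :=
  Matrix.single i j 1 - Matrix.single j i 1

/-- The general element of `u(3) ⊂ so(7)` with parameters `a, b, c, d, e, f, g, h, k`. -/
def Zmat (a b c d e f g h k : ℝ) : Matrix (Fin 7) (Fin 7) ℝ :=
  !![0, a, b, d, e, f, 0;
     -a, 0, c, e, g, h, 0;
     -b, -c, 0, f, h, k, 0;
     -d, -e, -f, 0, a, b, 0;
     -e, -g, -h, -a, 0, c, 0;
     -f, -h, -k, -b, -c, 0, 0;
     0, 0, 0, 0, 0, 0, 0]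

theorem F_apply (i j k l : Fin 7) :
    F i j k l = (if i = k ∧ j = l then 1 else 0) - (if j = k ∧ i = l then 1 else 0) := by
  simp [F, single_apply]

theorem Zmat_eq_sum_F (a b c d e f g h k : ℝ) :
    Zmat a b c d e f g h k =
      a • (F 0 1 + F 3 4) + b • (F 0 2 + F 3 5) + c • (F 1 2 + F 4 5) + d • F 0 3 +
        e • (F 0 4 + F 1 3) + f • (F 0 5 + F 2 3) + g • F 1 4 + h • (F 1 5 + F 2 4) +
        k • F 2 5 := by
  ext i j
  fin_cases i <;> fin_cases j <;> simp [Zmat, F_apply]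

theorem F06_commutator_Y (q r : ℝ) :
    F 0 6 * (q • (F 0 5 - F 2 3) + r • (F 1 5 - F 2 4)) -
      (q • (F 0 5 - F 2 3) + r • (F 1 5 - F 2 4)) * F 0 6 = q • F 5 6 := by
  ext i j
  fin_cases i <;> fin_cases j <;> simp [F_apply, mul_apply]

theorem F06_commutator_Zmat (a b c d e f g h k : ℝ) :
    F 0 6 * Zmat a b c d e f g h k - Zmat a b c d e f g h k * F 0 6 =
      a • F 1 6 + b • F 2 6 + d • F 3 6 + e • F 4 6 + f • F 5 6 := by
  ext i j
  simp only [Matrix.sub_apply, mul_apply, Fin.sum_univ_seven]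
  fin_cases i <;> fin_cases j <;> simp [Zmat, F_apply]

theorem Zmat_commutator_Y (a b c d e f g h k q r : ℝ) :
    Zmat a b c d e f g h k * (q • (F 0 5 - F 2 3) + r • (F 1 5 - F 2 4)) -
      (q • (F 0 5 - F 2 3) + r • (F 1 5 - F 2 4)) * Zmat a b c d e f g h k =
      (h * q - f * r) • (F 0 1 - F 3 4) + (d * q + e * r + k * q) • (F 0 2 - F 3 5) +
        (c * q - b * r) • (F 0 4 - F 1 3) + (a * r) • (F 0 5 - F 2 3) +
        (e * q + g * r + k * r) • (F 1 2 - F 4 5) - (a * q) • (F 1 5 - F 2 4) := by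
  ext i j
  simp only [Matrix.sub_apply, mul_apply, Fin.sum_univ_seven]
  fin_cases i <;> fin_cases j <;> simp [Zmat, F_apply] <;> ring

theorem stmt_3_general (x₁ x₂ s₁ q r a b c d e f g h k : ℝ)
    (hx₁ : 0 < x₁)
    (hs₁ : s₁ ≠ 0) (hq : q ≠ 0) (hr : r ≠ 0)
    (X Y Z : Matrix (Fin 7) (Fin 7) ℝ)
    (hX : X = s₁ • F 0 6)
    (hY : Y = q • (F 0 5 - F 2 3) + r • (F 1 5 - F 2 4))
    (hZ : Z = Zmat a b c d e f g h k)
    (h1 : Z * Y - Y * Z = 0)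
    (h2 : (x₂ - x₁) • (X * Y - Y * X) = x₁ • (X * Z - Z * X)) :
    a = 0 ∧ b = 0 ∧ c = 0 ∧ d = 0 ∧ e = 0 ∧ g = 0 ∧ k = 0 ∧
    f = (x₂ - x₁) / x₁ * q ∧ h = (x₂ - x₁) / x₁ * r ∧
    X + Y + Z =
      s₁ • F 0 6 + (x₂ / x₁ * q) • F 0 5 + (x₂ / x₁ * r) • F 1 5 +
        ((x₂ - 2 * x₁) / x₁ * q) • F 2 3 + ((x₂ - 2 * x₁) / x₁ * r) • F 2 4 := by
  subst hX hY hZ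
  rw [Zmat_commutator_Y] at h1
  simp only [smul_mul_assoc, mul_smul_comm, ← smul_sub, F06_commutator_Y,
    F06_commutator_Zmat] at h2
  have hx₁0 := hx₁.ne'
  have ha : a = 0 := by simpa [F_apply, hx₁0, hs₁] using congr_fun₂ h2 1 6
  have hb : b = 0 := by simpa [F_apply, hx₁0, hs₁] using congr_fun₂ h2 2 6
  have hd : d = 0 := by simpa [F_apply, hx₁0, hs₁] using congr_fun₂ h2 3 6
  have he : e = 0 := by simpa [F_apply, hx₁0, hs₁] using congr_fun₂ h2 4 6
  have hxf : x₁ * f = (x₂ - x₁) * q := by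
    have h56 : (x₂ - x₁) * (s₁ * q) = x₁ * (s₁ * f) := by simpa [F_apply] using congr_fun₂ h2 5 6
    exact mul_left_cancel₀ hs₁ (by linear_combination -h56)
  have hhf : h * q = f * r := by simpa [F_apply, sub_eq_zero] using congr_fun₂ h1 0 1
  have hk : k = 0 := by simpa [F_apply, hd, he, hq] using congr_fun₂ h1 0 2
  have hc : c = 0 := by simpa [F_apply, hb, hq] using congr_fun₂ h1 0 4
  have hg : g = 0 := by simpa [F_apply, he, hk, hr] using congr_fun₂ h1 1 2
  have hf : f = (x₂ - x₁) / x₁ * q := by field_simp; linarith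
  have hh : h = (x₂ - x₁) / x₁ * r := by
    field_simp
    exact mul_right_cancel₀ hq (by linear_combination x₁ * hhf + r * hxf)
  refine ⟨ha, hb, hc, hd, he, hg, hk, hf, hh, ?_⟩
  subst ha hb hc hd he hg hk hf hh
  rw [Zmat_eq_sum_F]
  match_scalars <;> field_simp <;> ring

/-- Lemma `vspom1` of the paper: the form of a geodesic vector
`W = X + Y + Z` on `(SO(7)/U(3), μ_{x₁,x₂})` with `x₁ < x₂ < 2x₁`. -/
theorem stmt_3 (x₁ x₂ s₁ q r a b c d e f g h k : ℝ)
    (hx₁ : 0 < x₁) (hx₁₂ : x₁ < x₂) (hx₂ : x₂ < 2 * x₁)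
    (hs₁ : s₁ ≠ 0) (hq : q ≠ 0) (hr : r ≠ 0)
    (X Y Z : Matrix (Fin 7) (Fin 7) ℝ)
    (hX : X = s₁ • F 0 6)
    (hY : Y = q • (F 0 5 - F 2 3) + r • (F 1 5 - F 2 4))
    (hZ : Z = Zmat a b c d e f g h k)
    (h1 : Z * Y - Y * Z = 0)
    (h2 : (x₂ - x₁) • (X * Y - Y * X) = x₁ • (X * Z - Z * X)) :
    a = 0 ∧ b = 0 ∧ c = 0 ∧ d = 0 ∧ e = 0 ∧ g = 0 ∧ k = 0 ∧
    f = (x₂ - x₁) / x₁ * q ∧ h = (x₂ - x₁) / x₁ * r ∧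
    X + Y + Z =
      s₁ • F 0 6 + (x₂ / x₁ * q) • F 0 5 + (x₂ / x₁ * r) • F 1 5 +
        ((x₂ - 2 * x₁) / x₁ * q) • F 2 3 + ((x₂ - 2 * x₁) / x₁ * r) • F 2 4 :=
  stmt_3_general x₁ x₂ s₁ q r a b c d e f g h k hx₁ hs₁ hq hr X Y Z hX hY hZ h1 h2
end

section
/- For all real numbers s₁, q, r, λ, the characteristic polynomial of the 7×7 skew-symmetric matrix W = s₁F₁₇ + λq·F₁₆ + λr·F₂₆ + (λ−2)q·F₃₄ + (λ−2)r·F₃₅ equals z⁷ + (a + b(λ² + (2−λ)²))z⁵ + (ab(2−λ)² + acλ² + b²λ²(2−λ)²)z³ + abcλ²(2−λ)²·z, where a = s₁², b = q² + r², c = r². -/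
open Matrix Polynomial

/-!
The coordinate subspaces spanned by `e₃, e₄, e₅` and by `e₁, e₂, e₆, e₇` are invariant under `W`,
so after reordering the basis `W` is block diagonal with skew-symmetric blocks of sizes 3 and 4.
A skew-symmetric matrix whose entries above the diagonal are `v` has characteristic polynomial
`z³ + |v|² z` in size 3 and `z⁴ + |v|² z² + Pf²` in size 4, `Pf` being the Pfaffian. Here the
3 × 3 block contributes `z³ + (2 - λ)² b z` and the 4 × 4 block `z⁴ + (a + λ² b) z² + λ² a c`;
their product is the claimed polynomial.
-/

namespace Matrix

variable {R : Type*} [CommRing R]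

theorem charpoly_skew_fin_three (x y z : R) :
    (!![0, x, y; -x, 0, z; -y, -z, 0] : Matrix (Fin 3) (Fin 3) R).charpoly =
      X ^ 3 + C (x ^ 2 + y ^ 2 + z ^ 2) * X := by
  rw [charpoly, det_fin_three]
  simp
  ring

theorem charpoly_skew_fin_four (a b c d e f : R) :
    (!![0, a, b, c; -a, 0, d, e; -b, -d, 0, f; -c, -e, -f, 0] :
        Matrix (Fin 4) (Fin 4) R).charpoly =
      X ^ 4 + C (a ^ 2 + b ^ 2 + c ^ 2 + d ^ 2 + e ^ 2 + f ^ 2) * X ^ 2 +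
        C ((a * f - b * e + c * d) ^ 2) := by
  rw [charpoly, det_succ_row_zero]
  simp [Fin.sum_univ_succ, det_fin_three, Fin.succAbove]
  ring

end Matrix

def finSevenSplit : Fin 3 ⊕ Fin 4 ≃ Fin 7 where
  toFun := Sum.elim ![2, 3, 4] ![0, 1, 5, 6]
  invFun := ![.inr 0, .inr 1, .inl 0, .inl 1, .inl 2, .inr 2, .inr 3]
  left_inv := by decide
  right_inv := by decide

theorem reindex_finSevenSplit (α β γ δ ε : ℝ) :
    reindex finSevenSplit.symm finSevenSplit.symm
        (α • F 0 6 + β • F 0 5 + γ • F 1 5 + δ • F 2 3 + ε • F 2 4) =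
      fromBlocks !![0, δ, ε; -δ, 0, 0; -ε, 0, 0] 0 0
        !![0, 0, β, α; 0, 0, γ, 0; -β, -γ, 0, 0; -α, 0, 0, 0] := by
  ext (i | i) (j | j) <;> fin_cases i <;> fin_cases j <;> simp [F, finSevenSplit]

/-- the characteristic polynomial of
`W = s₁F₁₇ + λq·F₁₆ + λr·F₂₆ + (λ−2)q·F₃₄ + (λ−2)r·F₃₅` (Lemma `vspom4` of the paper). -/
theorem stmt_4 (s₁ q r lam a b c : ℝ)
    (ha : a = s₁ ^ 2) (hb : b = q ^ 2 + r ^ 2) (hc : c = r ^ 2)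
    (W : Matrix (Fin 7) (Fin 7) ℝ)
    (hW : W = s₁ • F 0 6 + (lam * q) • F 0 5 + (lam * r) • F 1 5 +
        ((lam - 2) * q) • F 2 3 + ((lam - 2) * r) • F 2 4) :
    W.charpoly =
      X ^ 7 + C (a + b * (lam ^ 2 + (2 - lam) ^ 2)) * X ^ 5 +
        C (a * b * (2 - lam) ^ 2 + a * c * lam ^ 2 + b ^ 2 * lam ^ 2 * (2 - lam) ^ 2) * X ^ 3 +
        C (a * b * c * lam ^ 2 * (2 - lam) ^ 2) * X := by
  subst ha hb hc hW
  have h3 := charpoly_skew_fin_three ((lam - 2) * q) ((lam - 2) * r) 0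
  have h4 := charpoly_skew_fin_four 0 (lam * q) s₁ (lam * r) 0 0
  rw [neg_zero] at h3 h4
  rw [← charpoly_reindex finSevenSplit.symm, reindex_finSevenSplit, charpoly_fromBlocks_zero₁₂,
    h3, h4]
  simp only [map_add, map_mul, map_sub, map_pow, map_ofNat, map_zero]
  ring
end

section
/- Let λ be a real number with 1 < λ < 2, and set b = 1, a = λ²((2−λ)² + λ³ − 1), c = λ³(2−λ)²/((2−λ)² + λ³ − 1), b̃ = λ², ã = (2−λ)² + λ⁴(λ−1), c̃ = λ³(2−λ)²/((2−λ)² + λ⁴(λ−1)). Then the following three equations hold: (1) a + b(λ² + (2−λ)²) = ã + b̃(λ² + (2−λ)²); (2) ab(2−λ)² + acλ² + b²λ²(2−λ)² = ãb̃(2−λ)² + ãc̃λ² + b̃²λ²(2−λ)²; (3) abc·λ²(2−λ)² = ãb̃c̃·λ²(2−λ)². -/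
/-- the system of equations verifying that the characteristic polynomials
of the two geodesic vectors `W` and `W̃` coincide (Lemma `vspom4` of the paper). -/
theorem stmt_5 (lam : ℝ) (hlam₁ : 1 < lam) (hlam₂ : lam < 2)
    (a b c ta tb tc : ℝ)
    (hb : b = 1)
    (ha : a = lam ^ 2 * ((2 - lam) ^ 2 + lam ^ 3 - 1))
    (hc : c = lam ^ 3 * (2 - lam) ^ 2 / ((2 - lam) ^ 2 + lam ^ 3 - 1))
    (htb : tb = lam ^ 2)
    (hta : ta = (2 - lam) ^ 2 + lam ^ 4 * (lam - 1))
    (htc : tc = lam ^ 3 * (2 - lam) ^ 2 / ((2 - lam) ^ 2 + lam ^ 4 * (lam - 1))) :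
    a + b * (lam ^ 2 + (2 - lam) ^ 2) = ta + tb * (lam ^ 2 + (2 - lam) ^ 2) ∧
    a * b * (2 - lam) ^ 2 + a * c * lam ^ 2 + b ^ 2 * lam ^ 2 * (2 - lam) ^ 2 =
      ta * tb * (2 - lam) ^ 2 + ta * tc * lam ^ 2 + tb ^ 2 * lam ^ 2 * (2 - lam) ^ 2 ∧
    a * b * c * lam ^ 2 * (2 - lam) ^ 2 = ta * tb * tc * lam ^ 2 * (2 - lam) ^ 2 := by
  have h1 : (2 - lam) ^ 2 + lam ^ 3 - 1 ≠ 0 := by nlinarith [sq_nonneg (2 - lam)]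
  have h2 : (2 - lam) ^ 2 + lam ^ 4 * (lam - 1) ≠ 0 := by
    nlinarith [sq_nonneg (2 - lam), pow_pos (by linarith : (0:ℝ) < lam) 4]
  subst hb ha hc htb hta htc
  refine ⟨by ring, ?_, ?_⟩ <;> field_simp <;> ring
end

section
/- For all real numbers c, d, x₁, x₂ with c ≠ 0 and 0 < x₂ < 2x₁, the inequality (|d|(2x₁ − x₂) + √(c²x₁² + d²x₂²))²·x₂ < 2x₁²(x₁c² + 2x₂d²) holds. -/
/-- the key inequality (Lemma 8 in [BerNik]). -/
theorem stmt_8 (c d x₁ x₂ : ℝ) (hc : c ≠ 0) (hx₂ : 0 < x₂) (hx : x₂ < 2 * x₁) :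
    (|d| * (2 * x₁ - x₂) + Real.sqrt (c ^ 2 * x₁ ^ 2 + d ^ 2 * x₂ ^ 2)) ^ 2 * x₂ <
      2 * x₁ ^ 2 * (x₁ * c ^ 2 + 2 * x₂ * d ^ 2) := by
  set s := Real.sqrt (c ^ 2 * x₁ ^ 2 + d ^ 2 * x₂ ^ 2) with hs
  have hx₁ : 0 < x₁ := by linarith
  have hnn : 0 ≤ c ^ 2 * x₁ ^ 2 + d ^ 2 * x₂ ^ 2 := by positivity
  have hs2 : s ^ 2 = c ^ 2 * x₁ ^ 2 + d ^ 2 * x₂ ^ 2 := Real.sq_sqrt hnn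
  have hs0 : 0 ≤ s := Real.sqrt_nonneg _
  have hd2 : |d| ^ 2 = d ^ 2 := sq_abs d
  have hd0 : 0 ≤ |d| := abs_nonneg d
  have hsgt : |d| * x₂ < s := by
    have h1 : (|d| * x₂) ^ 2 < s ^ 2 := by
      rw [hs2]
      have : 0 < c ^ 2 * x₁ ^ 2 := by positivity
      nlinarith [sq_abs d]
    nlinarith [mul_nonneg hd0 hx₂.le]
  have hsq : 0 < (s - |d| * x₂) ^ 2 := by
    have : 0 < s - |d| * x₂ := by linarith
    positivity
  have ht : 0 < 2 * x₁ - x₂ := by linarith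
  have key : 2 * x₁ ^ 2 * (x₁ * c ^ 2 + 2 * x₂ * d ^ 2) -
      (|d| * (2 * x₁ - x₂) + s) ^ 2 * x₂ = (2 * x₁ - x₂) * (s - |d| * x₂) ^ 2 := by
    linear_combination (-(2 * x₁)) * hs2 + (-(2 * x₁ * x₂ * (2 * x₁ - x₂))) * hd2
  linarith [mul_pos ht hsq]
end

section
/- In the 2×2 quaternion matrices, let G₁ = diag(√2, 0), G₂ = diag(0, √2), E₁₂ = [[0,1],[−1,0]]. Let x₁, x₂ be real with 0 < x₁ and x₁ ≠ x₂, let c, d be real, and let Z = α·iG₁ + β·iG₂ + γ·jG₂ + δ·kG₂ with α, β, γ, δ ∈ ℝ. Suppose [Z, d·jG₁] = 0 and [Z, c·E₁₂] = ((x₂−x₁)/x₁)·[d·jG₁, c·E₁₂]. Then: (1) if c = 0 and d ≠ 0, then α = 0, so Z = β·iG₂ + γ·jG₂ + δ·kG₂; (2) if d = 0 and c ≠ 0, then γ = δ = 0 and β = α, so Z = α(iG₁ + iG₂); (3) if c ≠ 0 and d ≠ 0, then α = β = δ = 0 and γ = −((x₂−x₁)/x₁)d, so Z = −((x₂−x₁)/x₁)d·jG₂.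 -/
open Quaternion Matrix

/-- The quaternion unit `i`. -/
noncomputable def qi : ℍ[ℝ] := ⟨0, 1, 0, 0⟩
/-- The quaternion unit `j`. -/
noncomputable def qj : ℍ[ℝ] := ⟨0, 0, 1, 0⟩
/-- The quaternion unit `k`. -/
noncomputable def qk : ℍ[ℝ] := ⟨0, 0, 0, 1⟩

/-- `G₁ = diag(√2, 0)`. -/
noncomputable def G₁ : Matrix (Fin 2) (Fin 2) ℍ[ℝ] := !![((Real.sqrt 2 : ℝ) : ℍ[ℝ]), 0; 0, 0]
/-- `G₂ = diag(0, √2)`. -/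
noncomputable def G₂ : Matrix (Fin 2) (Fin 2) ℍ[ℝ] := !![0, 0; 0, ((Real.sqrt 2 : ℝ) : ℍ[ℝ])]
/-- `E₁₂ = [[0,1],[−1,0]]`. -/
noncomputable def E₁₂ : Matrix (Fin 2) (Fin 2) ℍ[ℝ] := !![0, 1; -1, 0]

/-!
Both `Z` and `jG₁` are diagonal, so `[Z, d·jG₁]` is diagonal with upper entry
`[√2α·i, √2d·j] = 4αd·k`; hence `αd = 0`. Bracketing `diag(a, b)` with `E₁₂` gives the
off-diagonal matrix with entries `a - b`, so the upper right entry of the second equation reads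
`√2c(αi - βi - γj - δk) = t·√2cd·j` with `t = (x₂ - x₁)/x₁`, and comparing `i`, `j`, `k`
components settles the three cases.
-/

attribute [local instance] LieRing.ofAssociativeRing

lemma qi_mul_qj : qi * qj = qk := by
  simp only [Quaternion.ext_iff, Quaternion.re_mul, Quaternion.imI_mul, Quaternion.imJ_mul,
    Quaternion.imK_mul]
  simp [qi, qj, qk]

lemma qj_mul_qi : qj * qi = -qk := by
  simp only [Quaternion.ext_iff, Quaternion.re_mul, Quaternion.imI_mul, Quaternion.imJ_mul,
    Quaternion.imK_mul, Quaternion.re_neg, Quaternion.imI_neg, Quaternion.imJ_neg,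
    Quaternion.imK_neg]
  simp [qi, qj, qk]

lemma qk_ne_zero : qk ≠ 0 := fun h => by simpa [qk] using congrArg QuaternionAlgebra.imK h

lemma lie_smul_qi_smul_qj (a b : ℝ) : ⁅a • qi, b • qj⁆ = (2 * a * b) • qk := by
  rw [Ring.lie_def, smul_mul_smul_comm, smul_mul_smul_comm, qi_mul_qj, qj_mul_qi, mul_comm b,
    ← smul_sub, sub_neg_eq_add, ← two_smul ℝ qk, smul_smul]
  congr 1; ring

lemma smul_G₁ (q : ℍ[ℝ]) : q • G₁ = !![√2 • q, 0; 0, 0] := by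
  simp [G₁, Quaternion.mul_coe_eq_smul]

lemma smul_G₂ (q : ℍ[ℝ]) : q • G₂ = !![0, 0; 0, √2 • q] := by
  simp [G₂, Quaternion.mul_coe_eq_smul]

section FinTwo

variable {R : Type*} [Ring R]

lemma lie_diag_diag_fin_two (a b a' b' : R) :
    ⁅!![a, 0; 0, b], !![a', 0; 0, b']⁆ = !![⁅a, a'⁆, 0; 0, ⁅b, b'⁆] := by
  simp only [Ring.lie_def, mul_fin_two]
  ext i j; fin_cases i <;> fin_cases j <;> simp

lemma lie_diag_fin_two_skew (a b : R) :
    ⁅!![a, 0; 0, b], !![0, 1; -1, 0]⁆ = !![0, a - b; a - b, 0] := by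
  rw [Ring.lie_def, mul_fin_two, mul_fin_two]
  ext i j; fin_cases i <;> fin_cases j <;> simp [sub_eq_add_neg, add_comm]

end FinTwo

/-- An element of the isotropy algebra `𝔲(1) ⊕ 𝔰𝔭(1)`, in the basis `iG₁, iG₂, jG₂, kG₂`. -/
noncomputable def isotropyVec (α β γ δ : ℝ) : Matrix (Fin 2) (Fin 2) ℍ[ℝ] :=
  α • (qi • G₁) + β • (qi • G₂) + γ • (qj • G₂) + δ • (qk • G₂)

lemma isotropyVec_eq (α β γ δ : ℝ) :
    isotropyVec α β γ δ = !![(√2 * α) • qi, 0; 0, √2 • (β • qi + γ • qj + δ • qk)] := by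
  simp [isotropyVec, smul_G₁, smul_G₂, smul_add, smul_comm √2, smul_smul, mul_comm α]

lemma eq_zero_of_lie_smul_qj_G₁_eq_zero {α β γ δ d : ℝ} (hd : d ≠ 0)
    (h : ⁅isotropyVec α β γ δ, d • (qj • G₁)⁆ = 0) : α = 0 := by
  rw [isotropyVec_eq, smul_G₁, lie_smul, lie_diag_diag_fin_two] at h
  have h00 := congrFun (congrFun h 0) 0
  simp only [Matrix.smul_apply, Matrix.of_apply, Matrix.cons_val_zero, Matrix.zero_apply,
    lie_smul_qi_smul_qj, smul_smul, smul_eq_zero, qk_ne_zero, or_false] at h00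
  have hs : √2 * √2 = 2 := Real.mul_self_sqrt zero_le_two
  have : 4 * α * d = 0 := by linear_combination h00 - 2 * α * d * hs
  simpa [hd] using this

lemma eq_of_lie_E₁₂ {α β γ δ c d t : ℝ} (hc : c ≠ 0)
    (h : ⁅isotropyVec α β γ δ, c • E₁₂⁆ = t • ⁅d • (qj • G₁), c • E₁₂⁆) :
    β = α ∧ γ = -t * d ∧ δ = 0 := by
  rw [isotropyVec_eq, smul_G₁, E₁₂] at h
  simp only [lie_smul, smul_lie, lie_diag_fin_two_skew] at h
  have h01 := congrFun (congrFun h 0) 1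
  simp only [Matrix.smul_apply, of_apply, cons_val', cons_val_one, cons_val_fin_one,
    cons_val_zero, sub_zero, smul_eq_mul, Quaternion.ext_iff, re_smul, re_sub, re_add, imI_smul,
    imI_sub, imI_add, imJ_smul, imJ_sub, imJ_add, imK_smul, imK_sub, imK_add] at h01
  simp only [qi, qj, qk] at h01
  obtain ⟨-, hi, hj, hk⟩ := h01
  have hcs : c * √2 ≠ 0 := mul_ne_zero hc (by positivity)
  exact ⟨mul_left_cancel₀ hcs (by linear_combination -hi),
    mul_left_cancel₀ hcs (by linear_combination -hj),
    mul_left_cancel₀ hcs (by linear_combination -hk)⟩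

theorem stmt_10_general (x₁ x₂ c d α β γ δ : ℝ)
    (Z : Matrix (Fin 2) (Fin 2) ℍ[ℝ])
    (hZ : Z = α • (qi • G₁) + β • (qi • G₂) + γ • (qj • G₂) + δ • (qk • G₂))
    (h1 : Z * (d • (qj • G₁)) - (d • (qj • G₁)) * Z = 0)
    (h2 : Z * (c • E₁₂) - (c • E₁₂) * Z =
      ((x₂ - x₁) / x₁) • ((d • (qj • G₁)) * (c • E₁₂) - (c • E₁₂) * (d • (qj • G₁)))) :
    (c = 0 → d ≠ 0 → α = 0 ∧ Z = β • (qi • G₂) + γ • (qj • G₂) + δ • (qk • G₂)) ∧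
    (d = 0 → c ≠ 0 → γ = 0 ∧ δ = 0 ∧ β = α ∧ Z = α • (qi • G₁ + qi • G₂)) ∧
    (c ≠ 0 → d ≠ 0 → α = 0 ∧ β = 0 ∧ δ = 0 ∧ γ = -((x₂ - x₁) / x₁) * d ∧
      Z = (-((x₂ - x₁) / x₁) * d) • (qj • G₂)) := by
  subst hZ
  simp only [← Ring.lie_def] at h1 h2
  refine ⟨fun _ hd => ?_, fun hd hc => ?_, fun hc hd => ?_⟩
  · obtain rfl := eq_zero_of_lie_smul_qj_G₁_eq_zero hd h1
    simp
  · obtain ⟨rfl, rfl, rfl⟩ := eq_of_lie_E₁₂ hc h2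
    subst hd
    simp [smul_add]
  · obtain rfl := eq_zero_of_lie_smul_qj_G₁_eq_zero hd h1
    obtain ⟨rfl, rfl, rfl⟩ := eq_of_lie_E₁₂ hc h2
    simp

/-- Lemma `lem3` of the paper: the form of the `h`-component `Z` of a
geodesic vector `W = X + Y + Z` on `Sp(2)/U(1)·Sp(1)`. -/
theorem stmt_10 (x₁ x₂ c d α β γ δ : ℝ)
    (hx₁ : 0 < x₁) (hx : x₁ ≠ x₂)
    (Z : Matrix (Fin 2) (Fin 2) ℍ[ℝ])
    (hZ : Z = α • (qi • G₁) + β • (qi • G₂) + γ • (qj • G₂) + δ • (qk • G₂))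
    (h1 : Z * (d • (qj • G₁)) - (d • (qj • G₁)) * Z = 0)
    (h2 : Z * (c • E₁₂) - (c • E₁₂) * Z =
      ((x₂ - x₁) / x₁) • ((d • (qj • G₁)) * (c • E₁₂) - (c • E₁₂) * (d • (qj • G₁)))) :
    (c = 0 → d ≠ 0 → α = 0 ∧ Z = β • (qi • G₂) + γ • (qj • G₂) + δ • (qk • G₂)) ∧
    (d = 0 → c ≠ 0 → γ = 0 ∧ δ = 0 ∧ β = α ∧ Z = α • (qi • G₁ + qi • G₂)) ∧
    (c ≠ 0 → d ≠ 0 → α = 0 ∧ β = 0 ∧ δ = 0 ∧ γ = -((x₂ - x₁) / x₁) * d ∧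
      Z = (-((x₂ - x₁) / x₁) * d) • (qj • G₂)) :=
  stmt_10_general x₁ x₂ c d α β γ δ Z hZ h1 h2
end

section
/- Let x₁, x₂ be real numbers with 0 < x₁ < x₂ < 2x₁ and set t = (x₂−x₁)/x₁. Let c > 0, d > 0, d̃ ≥ 0 and α ∈ ℝ satisfy c² + d² + d²t² = d̃² + α² and c² + 2d²t = 2·d̃·|α|. Then x₂·d̃² < x₁c² + x₂d². -/
/-- case 1) in the proof of Proposition `main` of the paper. -/
theorem stmt_17 (x₁ x₂ t c d dt α : ℝ)
    (hx₁ : 0 < x₁) (hx₁₂ : x₁ < x₂) (hx₂ : x₂ < 2 * x₁)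
    (ht : t = (x₂ - x₁) / x₁)
    (hc : 0 < c) (hd : 0 < d) (hdt : 0 ≤ dt)
    (h1 : c ^ 2 + d ^ 2 + d ^ 2 * t ^ 2 = dt ^ 2 + α ^ 2)
    (h2 : c ^ 2 + 2 * d ^ 2 * t = 2 * dt * |α|) :
    x₂ * dt ^ 2 < x₁ * c ^ 2 + x₂ * d ^ 2 := by
  have hxt : x₁ * t = x₂ - x₁ := by
    rw [ht]; field_simp
  have ht0 : 0 < t := by nlinarith
  have ht1 : t < 1 := by nlinarith
  have habs : |α| ^ 2 = α ^ 2 := sq_abs α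
  have hαnn : 0 ≤ |α| := abs_nonneg α
  obtain ⟨s, hs⟩ : ∃ s, s = dt + |α| := ⟨_, rfl⟩
  have h4 : s ^ 2 = 2 * c ^ 2 + d ^ 2 * (1 + t) ^ 2 := by
    simp only [hs]; linear_combination -h1 - h2 + habs
  have hsnn : 0 ≤ s := by rw [hs]; positivity
  have hsgt : d * (1 + t) < s := by
    nlinarith
  have hb : 0 ≤ d * (1 - t) := mul_nonneg hd.le (by linarith)
  have h5 : 2 * dt ≤ s + d * (1 - t) := by
    have h3 : (dt - |α|) ^ 2 = (d * (1 - t)) ^ 2 := by nlinarith [habs, h1, h2]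
    by_contra h
    push_neg at h
    have ha : d * (1 - t) < dt - |α| := by rw [hs] at h; linarith
    nlinarith [h3, mul_pos (by linarith : (0:ℝ) < dt - |α| - d * (1 - t))
      (by linarith : (0:ℝ) < dt - |α| + d * (1 - t))]
  have key : (1 + t) * dt ^ 2 < c ^ 2 + (1 + t) * d ^ 2 := by
    have hid : 4 * c ^ 2 + 4 * (1 + t) * d ^ 2 =
        (1 + t) * (s + d * (1 - t)) ^ 2 + (1 - t) * (s - (1 + t) * d) ^ 2 := by
      linear_combination (-2) * h4
    have hA : (2 * dt) ^ 2 ≤ (s + d * (1 - t)) ^ 2 := by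
      nlinarith [h5, hdt]
    have hA' : (1 + t) * (2 * dt) ^ 2 ≤ (1 + t) * (s + d * (1 - t)) ^ 2 :=
      mul_le_mul_of_nonneg_left hA (by linarith)
    have hB : 0 < (1 - t) * (s - (1 + t) * d) ^ 2 :=
      mul_pos (by linarith) (pow_pos (sub_pos.mpr (by linarith : (1 + t) * d < s)) 2)
    linarith [hA', hB, hid]
  have hx2 : x₂ = x₁ * (1 + t) := by linarith
  rw [hx2]
  have h := mul_lt_mul_of_pos_left key hx₁
  ring_nf at h ⊢
  linarith
end
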